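/- arXiv:1502.01412 — 4 statements merged into one kernel-verified Lean document; each statement's English description precedes it below -/
import Mathlib

section
/- Let M be an n×n complex matrix whose underlying directed graph (with an arc from i to j whenever M_{ij} ≠ 0) is strongly connected with period p. Then the set of non-zero eigenvalues of M (with algebraic multiplicity) is invariant under multiplication by e^{2πi/p}; more precisely, for every non-zero complex number λ and every p-th root of unity ζ, the algebraic multiplicity of λ as an eigenvalue of M equals the algebraic multiplicity of ζλ. -/
/-- There is a walk of length `l` from `i` to `j` in the digraph given by the relation `R`. -/
def HasWalk {n : ℕ} (R : Fin n → Fin n → Prop) (i j : Fin n) (l : ℕ) : Prop :=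
  ∃ f : ℕ → Fin n, f 0 = i ∧ f l = j ∧ ∀ k < l, R (f k) (f (k + 1))

/-!
Fix a vertex `i₀` and let `φ i` be the length of some walk from `i₀` to `i`. Closing walks up
through `i₀` shows `φ j ≡ φ i + 1 (mod p)` along every arc `i → j`, so conjugating `M` by
`diag (ζ ^ φ i)` multiplies every non-zero entry by `ζ`: the matrices `M` and `ζ • M` are
similar. On the other hand the characteristic polynomial of `ζ • M` is that of `M` with its
roots scaled by `ζ`, so `ζ * λ` is a root of it exactly as often as `λ` is a root of that of `M`.
-/

open Polynomial Matrix

namespace HasWalk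

variable {n : ℕ} {R : Fin n → Fin n → Prop} {i j k : Fin n}

lemma single (h : R i j) : HasWalk R i j 1 :=
  ⟨fun m => if m = 0 then i else j, rfl, rfl, fun m hm => by
    obtain rfl : m = 0 := by omega
    simpa using h⟩

lemma append {l₁ l₂ : ℕ} (h₁ : HasWalk R i j l₁) (h₂ : HasWalk R j k l₂) :
    HasWalk R i k (l₁ + l₂) := by
  obtain ⟨f, rfl, rfl, hf⟩ := h₁
  obtain ⟨g, hg₀, rfl, hg⟩ := h₂
  refine ⟨fun m => if m ≤ l₁ then f m else g (m - l₁), by simp, ?_, fun m hm => ?_⟩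
  · rcases Nat.eq_zero_or_pos l₂ with rfl | hl₂
    · simp [hg₀]
    · simp [show ¬ l₁ + l₂ ≤ l₁ by omega]
  · rcases lt_trichotomy m l₁ with hm₁ | rfl | hm₁
    · simpa [hm₁.le, Nat.succ_le_of_lt hm₁] using hf m hm₁
    · simpa [← hg₀] using hg 0 (by omega)
    · simpa [show ¬ m ≤ l₁ by omega, show ¬ m + 1 ≤ l₁ by omega,
        show m + 1 - l₁ = m - l₁ + 1 by omega] using hg (m - l₁) (by omega)

end HasWalk

lemma exists_level_add_one_modEq {n p : ℕ} {R : Fin n → Fin n → Prop}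
    (hconn : ∀ i j, ∃ l, HasWalk R i j l)
    (hcyc : ∀ i l, 0 < l → HasWalk R i i l → p ∣ l) :
    ∃ φ : Fin n → ℕ, ∀ i j, R i j → φ i + 1 ≡ φ j [MOD p] := by
  have hcyc' : ∀ i l, HasWalk R i i l → p ∣ l := fun i l hw =>
    (Nat.eq_zero_or_pos l).elim (fun h => h ▸ dvd_zero p) (hcyc i l · hw)
  rcases isEmpty_or_nonempty (Fin n) with hn | ⟨⟨i₀⟩⟩
  · exact ⟨0, fun i => isEmptyElim i⟩
  choose φ hφ using hconn i₀
  refine ⟨φ, fun i j hij => ?_⟩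
  obtain ⟨m, hm⟩ := hconn j i₀
  have hj : p ∣ φ j + m := hcyc' _ _ ((hφ j).append hm)
  have hi : p ∣ φ i + 1 + m := hcyc' _ _ (((hφ i).append (.single hij)).append hm)
  exact Nat.ModEq.add_right_cancel' m
    ((Nat.modEq_zero_iff_dvd.2 hi).trans (Nat.modEq_zero_iff_dvd.2 hj).symm)

namespace Matrix

variable {ι K : Type*} [Fintype ι] [DecidableEq ι]

lemma charpoly_diagonal_conj [CommRing K] (d : ι → Kˣ) (M : Matrix ι ι K) :
    (diagonal (fun i => (↑(d i)⁻¹ : K)) * M * diagonal (fun i => (d i : K))).charpoly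
      = M.charpoly := by
  rw [charpoly_mul_comm, ← mul_assoc, diagonal_mul_diagonal]
  simp

lemma charpoly_smul [Field K] [Infinite K] (c : K) (M : Matrix ι ι K) :
    (c • M).charpoly = M.charpoly.scaleRoots c := by
  rcases eq_or_ne c 0 with rfl | hc
  · simp [scaleRoots_zero, charpoly_natDegree_eq_dim, (charpoly_monic M).leadingCoeff]
  refine Polynomial.funext fun t => ?_
  rw [← mul_inv_cancel_left₀ hc t, scaleRoots_eval_mul, charpoly_natDegree_eq_dim,
    eval_charpoly, eval_charpoly, ← det_smul, smul_sub]
  congr 1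
  ext i j
  simp [diagonal_apply]

lemma rootMultiplicity_charpoly_smul [Field K] [Infinite K] {c : K} (hc : c ≠ 0)
    (M : Matrix ι ι K) (x : K) :
    (c • M).charpoly.rootMultiplicity (c * x) = M.charpoly.rootMultiplicity x := by
  rw [charpoly_smul]
  exact rootMultiplicity_scaleRoots _ (IsRegular.of_ne_zero hc).left

lemma smul_eq_diagonal_conj_of_modEq [CommRing K] {p : ℕ} {u : Kˣ} (hu : u ^ p = 1)
    (M : Matrix ι ι K) (φ : ι → ℕ) (hφ : ∀ i j, M i j ≠ 0 → φ i + 1 ≡ φ j [MOD p]) :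
    (u : K) • M
      = diagonal (fun i => (↑(u ^ φ i)⁻¹ : K)) * M * diagonal (fun i => (↑(u ^ φ i) : K)) := by
  ext i j
  rw [mul_diagonal, diagonal_mul, Matrix.smul_apply, smul_eq_mul]
  by_cases hij : M i j = 0
  · simp [hij]
  have hstep : u ^ φ j = u ^ φ i * u := by
    rw [← pow_succ]
    exact (pow_eq_pow_iff_modEq.2 ((hφ i j hij).of_dvd (orderOf_dvd_of_pow_eq_one hu))).symm
  rw [hstep, Units.val_mul]
  linear_combination (-(M i j) * u) * Units.inv_mul (u ^ φ i)

end Matrix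

theorem stmt0_general {n : ℕ} (M : Matrix (Fin n) (Fin n) ℂ) (p : ℕ) (hp : 0 < p)
    (R : Fin n → Fin n → Prop) (hR : ∀ i j, R i j ↔ M i j ≠ 0)
    (hconn : ∀ i j, ∃ l, HasWalk R i j l)
    (hdvd : ∀ i l, 0 < l → HasWalk R i i l → p ∣ l)
    (lam : ℂ) (ζ : ℂ) (hζ : ζ ^ p = 1) :
    Polynomial.rootMultiplicity lam M.charpoly
      = Polynomial.rootMultiplicity (ζ * lam) M.charpoly := by
  have hζ0 : ζ ≠ 0 := fun h => by simp [h, hp.ne'] at hζ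
  obtain ⟨φ, hφ⟩ := exists_level_add_one_modEq hconn hdvd
  let u := Units.mk0 ζ hζ0
  have hu : u ^ p = 1 := Units.ext (by simpa [u] using hζ)
  rw [← rootMultiplicity_charpoly_smul hζ0, show ζ = u from rfl,
    smul_eq_diagonal_conj_of_modEq hu M φ (fun i j h => hφ i j ((hR i j).2 h)),
    charpoly_diagonal_conj]

/-- Let `M` be an `n×n` complex matrix whose underlying directed graph (arc from `i` to `j`
whenever `M i j ≠ 0`) is strongly connected with period `p` (the gcd of all lengths of directed
cycles). Then for every non-zero `lam : ℂ` and every `p`-th root of unity `ζ`, the algebraic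
multiplicity of `lam` as an eigenvalue of `M` equals that of `ζ * lam`. -/
theorem stmt0 {n : ℕ} (M : Matrix (Fin n) (Fin n) ℂ) (p : ℕ) (hp : 0 < p)
    (R : Fin n → Fin n → Prop) (hR : ∀ i j, R i j ↔ M i j ≠ 0)
    (hconn : ∀ i j, ∃ l, HasWalk R i j l)
    (hdvd : ∀ i l, 0 < l → HasWalk R i i l → p ∣ l)
    (hgcd : ∀ d : ℕ, (∀ i l, 0 < l → HasWalk R i i l → d ∣ l) → d ∣ p)
    (lam : ℂ) (hlam : lam ≠ 0) (ζ : ℂ) (hζ : ζ ^ p = 1) :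
    Polynomial.rootMultiplicity lam M.charpoly
      = Polynomial.rootMultiplicity (ζ * lam) M.charpoly :=
  stmt0_general M p hp R hR hconn hdvd lam ζ hζ
end

section
/- Let M be an n×n complex matrix whose underlying directed graph is strongly connected with period p, so that after reordering indices M is a block cyclic matrix with blocks A_1,…,A_p. If h(x) is the characteristic polynomial of the product A_1·A_2 ⋯ A_p (an m×m matrix), then the characteristic polynomial of M equals x^{n - pm}·h(x^p). -/
/-!
Write `p = k + 1` and view `X • 1 - M` as a `p × p` block matrix. Multiplying it on the right by
the block upper triangular matrix `V` with blocks `V i j = X ^ (k - (j - i)) • A (i+1) ⋯ A j`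
(for `i ≤ j`) makes the products telescope: the result is `X ^ p • 1` minus a matrix supported on
the last block row, whose diagonal block is `A 0 ⋯ A k`. Both `V` and the result are block
triangular, so taking determinants gives
`χ_M · X ^ (k m p) = X ^ (k m p) · det (X ^ p • 1 - A 0 ⋯ A k)`, and `X ^ (k m p)` is a
non-zero-divisor.
-/

open Polynomial Matrix

/-- The product `l[i+1] * ⋯ * l[j]`. -/
def List.segmentProd {M : Type*} [Monoid M] (l : List M) (i j : ℕ) : M :=
  ((l.drop (i + 1)).take (j - i)).prod

namespace List

variable {M : Type*} [Monoid M]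

@[simp]
theorem segmentProd_self (l : List M) (i : ℕ) : l.segmentProd i i = 1 := by
  simp [segmentProd]

theorem segmentProd_eq_getElem_mul (l : List M) {i j : ℕ} (hij : i < j) (hj : j < l.length) :
    l.segmentProd i j = l[i + 1] * l.segmentProd (i + 1) j := by
  rw [segmentProd, drop_eq_getElem_cons (by omega), show j - i = j - (i + 1) + 1 by omega,
    take_succ_cons, prod_cons, segmentProd]

theorem prod_take_succ_eq_getElem_zero_mul (l : List M) (j : ℕ) (hl : l ≠ []) :
    (l.take (j + 1)).prod = l[0]'(length_pos_iff.2 hl) * l.segmentProd 0 j := by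
  obtain ⟨a, l, rfl⟩ := exists_cons_of_ne_nil hl
  simp [segmentProd]

end List

namespace Matrix

def blockCyclic {S : Type*} [Zero S] {k : ℕ} (a : Fin (k + 1) → S) :
    Matrix (Fin (k + 1)) (Fin (k + 1)) S :=
  of fun i j => if j = i + 1 then a j else 0

section BlockCyclic

variable {T S : Type*} [CommRing T] [Ring S] [Algebra T S] {k : ℕ}

def blockCyclicUpperFactor (x : T) (a : Fin (k + 1) → S) :
    Matrix (Fin (k + 1)) (Fin (k + 1)) S :=
  of fun i j => if i ≤ j then x ^ (k - (j - i : ℕ)) • (List.ofFn a).segmentProd i j else 0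

def blockCyclicLastRow (x : T) (a : Fin (k + 1) → S) : Matrix (Fin (k + 1)) (Fin (k + 1)) S :=
  of fun i j => if i = Fin.last k then x ^ (k - j : ℕ) • ((List.ofFn a).take (j + 1)).prod else 0

theorem blockCyclic_mul_apply (a : Fin (k + 1) → S) (N : Matrix (Fin (k + 1)) (Fin (k + 1)) S)
    (i j : Fin (k + 1)) : (blockCyclic a * N) i j = a (i + 1) * N (i + 1) j := by
  simp [blockCyclic, mul_apply]

theorem smul_one_sub_blockCyclic_mul_blockCyclicUpperFactor (x : T) (a : Fin (k + 1) → S) :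
    (x • 1 - blockCyclic a) * blockCyclicUpperFactor x a =
      x ^ (k + 1) • 1 - blockCyclicLastRow x a := by
  ext i j
  simp only [sub_mul, smul_mul_assoc, one_mul, sub_apply, smul_apply, blockCyclic_mul_apply]
  induction i using Fin.lastCases with
  | last =>
    have hprod (j : ℕ) :
        ((List.ofFn a).take (j + 1)).prod = a 0 * (List.ofFn a).segmentProd 0 j := by
      rw [List.prod_take_succ_eq_getElem_zero_mul _ _ (by simp)]; simp
    simp only [Fin.last_add_one, blockCyclicLastRow, of_apply, if_true, hprod]
    induction j using Fin.lastCases with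
    | last => simp [blockCyclicUpperFactor, pow_succ', smul_smul]
    | cast j =>
      have : ¬ Fin.last k ≤ j.castSucc := by simp [Fin.le_def]
      simp [blockCyclicUpperFactor, this, one_apply_ne (Fin.castSucc_lt_last j).ne']
  | cast i =>
    have hW : blockCyclicLastRow x a i.castSucc j = 0 := by
      simp [blockCyclicLastRow, (Fin.castSucc_lt_last i).ne]
    simp only [hW, sub_zero, Fin.coeSucc_eq_succ, blockCyclicUpperFactor, of_apply, Fin.le_def,
      Fin.val_succ, Fin.val_castSucc]
    rcases lt_trichotomy (j : ℕ) i with hji | hji | hij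
    · have hne : i.castSucc ≠ j := fun h => by simp [← h] at hji
      simp [hji.not_ge, (hji.trans (Nat.lt_succ_self _)).not_ge, one_apply_ne hne]
    · obtain rfl : j = i.castSucc := Fin.ext hji
      simp [pow_succ', smul_smul]
    · have hj : (j : ℕ) < (List.ofFn a).length := by simp [j.is_lt]
      rw [if_pos hij.le, if_pos (Nat.succ_le_of_lt hij),
        (List.ofFn a).segmentProd_eq_getElem_mul hij hj, one_apply_ne (Fin.ne_of_val_ne hij.ne),
        smul_zero, List.getElem_ofFn, mul_smul_comm, smul_smul, ← pow_succ', show k - (j - i) + 1 = k - (j - (i + 1)) by omega]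
      exact sub_self _

end BlockCyclic

section BlockComp

variable {ι α n R : Type*} [Fintype ι] [DecidableEq ι] [Fintype α] [DecidableEq α] [LinearOrder α]
  [Fintype n] [DecidableEq n] [CommRing R]

theorem det_comp_of_blockTriangular (N : Matrix ι ι (Matrix n n R)) (b : ι ≃ α)
    (hN : N.BlockTriangular b) : (comp ι ι n n R N).det = ∏ i, (N i i).det := by
  rw [hN.comp.det_fintype, ← b.prod_comp]
  refine Finset.prod_congr rfl fun i _ => ?_
  let e : n ≃ {q : ι × n // b q.1 = b i} :=
    { toFun a := ⟨(i, a), rfl⟩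
      invFun q := q.1.2
      right_inv := fun ⟨(j, a), hj⟩ => by obtain rfl := b.injective hj; rfl }
  rw [← det_submatrix_equiv_self e]
  rfl

theorem charmatrix_comp (N : Matrix ι ι (Matrix n n R)) :
    charmatrix (comp ι ι n n R N) =
      comp ι ι n n R[X] ((X : R[X]) • 1 - N.map (fun B => B.map C)) := by
  ext ⟨i, a⟩ ⟨j, b⟩
  by_cases hij : i = j <;> by_cases hab : a = b <;> simp [hij, hab]

theorem det_X_pow_smul_one_sub_map_C (B : Matrix n n R) (k : ℕ) :
    ((X ^ k : R[X]) • (1 : Matrix n n R[X]) - B.map C).det = expand R k B.charpoly := by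
  rw [charpoly, AlgHom.map_det]
  congr 1
  ext i j
  by_cases hij : i = j <;> simp [hij]

end BlockComp

section BlockCyclicDet

variable {n R : Type*} [Fintype n] [DecidableEq n] [CommRing R] {k : ℕ}

theorem det_comp_blockCyclicUpperFactor (x : R) (a : Fin (k + 1) → Matrix n n R) :
    (comp _ _ n n R (blockCyclicUpperFactor x a)).det = x ^ (k * Fintype.card n * (k + 1)) := by
  rw [det_comp_of_blockTriangular (blockCyclicUpperFactor x a) (Equiv.refl _) fun i j hji =>
    if_neg (not_le.2 hji)]
  simp [blockCyclicUpperFactor, ← pow_mul]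

theorem det_comp_smul_one_sub_blockCyclicLastRow (x : R) (a : Fin (k + 1) → Matrix n n R) :
    (comp _ _ n n R (x ^ (k + 1) • 1 - blockCyclicLastRow x a)).det =
      x ^ ((k + 1) * Fintype.card n * k) * (x ^ (k + 1) • 1 - (List.ofFn a).prod).det := by
  rw [det_comp_of_blockTriangular _ OrderDual.toDual fun i j hij => ?_, Fin.prod_univ_castSucc]
  · simp [blockCyclicLastRow, (Fin.castSucc_lt_last _).ne, ← pow_mul, List.take_of_length_le]
  · have hij : i < j := hij
    simp [blockCyclicLastRow, hij.ne, (hij.trans_le (Fin.le_last j)).ne]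

theorem charpoly_comp_blockCyclic (A : Fin (k + 1) → Matrix n n R) :
    (comp _ _ n n R (blockCyclic A)).charpoly = expand R (k + 1) (List.ofFn A).prod.charpoly := by
  set a : Fin (k + 1) → Matrix n n R[X] := fun i => (A i).map C
  have hcharmatrix : charmatrix (comp _ _ n n R (blockCyclic A)) =
      comp _ _ n n R[X] ((X : R[X]) • 1 - blockCyclic a) := by
    rw [charmatrix_comp]
    congr 2
    ext i j : 2
    simp only [blockCyclic, map_apply, of_apply]
    split_ifs <;> simp [a]
  have hprod : (List.ofFn a).prod = (List.ofFn A).prod.map C := by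
    change (List.ofFn ((C : R →+* R[X]).mapMatrix ∘ A)).prod = C.mapMatrix (List.ofFn A).prod
    rw [← List.map_ofFn, map_list_prod]
  have hfactor := congrArg (fun N => (comp _ _ n n R[X] N).det)
    (smul_one_sub_blockCyclic_mul_blockCyclicUpperFactor (X : R[X]) a)
  simp only [← compRingEquiv_apply, map_mul, det_mul] at hfactor
  simp only [compRingEquiv_apply, det_comp_blockCyclicUpperFactor,
    det_comp_smul_one_sub_blockCyclicLastRow, hprod, det_X_pow_smul_one_sub_map_C,
    ← hcharmatrix] at hfactor
  refine (isRegular_X_pow (R := R) (k * Fintype.card n * (k + 1))).right ?_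
  simp only [charpoly, hfactor]
  ring

end BlockCyclicDet

end Matrix

/-- Let `M` be the block cyclic matrix (of total size `n = p·m`) with blocks
`A 1, …, A (p-1)` on the block superdiagonal and `A 0` in the lower-left corner,
i.e. block row `i` maps to block column `i+1 (mod p)` via `A (i+1)`.
If `h` is the characteristic polynomial of the `m×m` product `A 0 · A 1 ⋯ A (p-1)`,
then the characteristic polynomial of `M` is `X^(n - p·m) · h(X^p)`. -/
theorem stmt1 (p m : ℕ) [NeZero p]
    (A : Fin p → Matrix (Fin m) (Fin m) ℂ)
    (M : Matrix (Fin p × Fin m) (Fin p × Fin m) ℂ)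
    (hM : ∀ (i j : Fin p) (a b : Fin m),
      M (i, a) (j, b) = if j = i + 1 then A j a b else 0) :
    M.charpoly =
      Polynomial.X ^ (Fintype.card (Fin p × Fin m) - p * m) *
        (Matrix.charpoly (List.ofFn fun i : Fin p => A i).prod).comp
          (Polynomial.X ^ p) := by
  obtain ⟨k, rfl⟩ := Nat.exists_eq_succ_of_ne_zero (NeZero.ne p)
  have hM_eq : M = comp _ _ _ _ ℂ (blockCyclic A) := by
    ext ⟨i, a⟩ ⟨j, b⟩
    rw [hM]
    split_ifs with h <;> simp [blockCyclic, h]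
  rw [hM_eq, charpoly_comp_blockCyclic, expand_eq_comp_X_pow, Fintype.card_prod, Fintype.card_fin,
    Fintype.card_fin, Nat.sub_self, pow_zero, one_mul]
end

section
/- Let q ≥ 2 and let s_q(n) denote the q-ary sum of digits of n. The Dirichlet series D(z) = Σ_{m≥1} (s_q(m) − s_q(m−1)) m^{−z}, absolutely convergent for Re z > 1, satisfies the closed form D(z) = ((1 − q^{1−z})/(1 − q^{−z})) · ζ(z), where ζ denotes the Riemann zeta function. -/
/-!
Write `v(n)` for the exponent of `q` in `n`. Adding one to `n` turns its `v(n + 1)` trailing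
digits `q - 1` into zeros and raises the next digit by one, so
`s_q(n + 1) - s_q(n) = 1 - (q - 1) v(n + 1)`. Hence `D(z) = ζ(z) - (q - 1) ∑ v(n) n^(-z)`, and since
`v(n)` counts the factorizations `n = q^k m` with `k ≥ 1`, the last series is the product
`(∑_{k ≥ 1} q^(-kz)) ζ(z) = q^(-z) / (1 - q^(-z)) ζ(z)`.
-/

namespace Nat

theorem digits_sum_add_base_mul {q b : ℕ} (hq : 1 < q) (hb : b < q) (a : ℕ) :
    (q.digits (b + q * a)).sum = b + (q.digits a).sum := by
  by_cases h : b ≠ 0 ∨ a ≠ 0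
  · rw [digits_add q hq b a hb h, List.sum_cons]
  · obtain ⟨rfl, rfl⟩ : b = 0 ∧ a = 0 := by tauto
    simp

theorem digits_sum_succ_add_mul_padicValNat {q : ℕ} (hq : 1 < q) (n : ℕ) :
    (q.digits (n + 1)).sum + (q - 1) * padicValNat q (n + 1) = (q.digits n).sum + 1 := by
  induction n using Nat.strong_induction_on with
  | _ n ih =>
  obtain ⟨b, a, hb, hn⟩ : ∃ b a, b < q ∧ n + 1 = b + q * a :=
    ⟨_, _, mod_lt _ (by omega), (mod_add_div _ _).symm⟩
  rcases b with _ | b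
  · obtain ⟨a, rfl⟩ : ∃ a', a = a' + 1 := exists_eq_succ_of_ne_zero (by rintro rfl; omega)
    have hn' : n = (q - 1) + q * a := by rw [mul_add] at hn; omega
    have ha : a < n := by nlinarith
    rw [hn, zero_add, padicValNat_base_mul hq (by omega : a + 1 ≠ 0), ← zero_add (q * (a + 1)),
      digits_sum_add_base_mul hq (by omega), hn', digits_sum_add_base_mul hq (by omega)]
    have ih_a := ih a ha
    rw [mul_add]
    omega
  · have hndvd : ¬ q ∣ n + 1 := by
      rw [hn, Nat.dvd_add_left (dvd_mul_right q a)]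
      exact not_dvd_of_pos_of_lt b.succ_pos hb
    rw [padicValNat.eq_zero_of_not_dvd hndvd, hn, digits_sum_add_base_mul hq hb,
      show n = b + q * a by omega, digits_sum_add_base_mul hq (by omega)]
    omega

theorem card_pow_succ_mul_succ_eq {q N : ℕ} (hq : 1 < q) (hN : N ≠ 0) :
    Nat.card {p : ℕ × ℕ // q ^ (p.1 + 1) * (p.2 + 1) = N} = padicValNat q N := by
  have hdvd (k : ℕ) : q ^ (k + 1) ∣ N ↔ k < padicValNat q N :=
    pow_dvd_iff_le_padicValNat (by omega) hN
  rw [← Nat.card_fin (padicValNat q N)]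
  refine Nat.card_eq_of_bijective (fun p => ⟨p.1.1, (hdvd _).1 ⟨_, p.2.symm⟩⟩) ⟨?_, ?_⟩
  · rintro ⟨⟨k, m⟩, hp⟩ ⟨⟨k', m'⟩, hp'⟩ hk
    obtain rfl : k = k' := congrArg Fin.val hk
    have : m + 1 = m' + 1 := Nat.eq_of_mul_eq_mul_left (by positivity) (hp.trans hp'.symm)
    simp_all
  · rintro ⟨k, hk⟩
    obtain ⟨d, hd⟩ := (hdvd k).2 hk
    obtain ⟨m, rfl⟩ : ∃ m, d = m + 1 := exists_eq_succ_of_ne_zero (by rintro rfl; simp_all)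
    exact ⟨⟨(k, m), hd.symm⟩, rfl⟩

end Nat

theorem hasSum_geometric_succ_of_norm_lt_one {K : Type*} [NormedDivisionRing K] {ξ : K}
    (hξ : ‖ξ‖ < 1) : HasSum (fun k : ℕ => ξ ^ (k + 1)) (ξ / (1 - ξ)) := by
  simpa only [pow_succ', div_eq_mul_inv] using (hasSum_geometric_of_norm_lt_one hξ).mul_left ξ

namespace Complex

theorem natCast_pow_cpow (q k : ℕ) (s : ℂ) : ((q ^ k : ℕ) : ℂ) ^ s = ((q : ℂ) ^ s) ^ k := by
  induction k with
  | zero => simp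
  | succ k ih => rw [pow_succ, Nat.cast_mul, natCast_mul_natCast_cpow, ih, pow_succ]

theorem norm_natCast_cpow_neg_lt_one {q : ℕ} (hq : 1 < q) {z : ℂ} (hz : 0 < z.re) :
    ‖(q : ℂ) ^ (-z)‖ < 1 := by
  rw [norm_natCast_cpow_of_pos (by omega), neg_re]
  exact Real.rpow_lt_one_of_one_lt_of_neg (by exact_mod_cast hq) (by linarith)

end Complex

open Complex

theorem hasSum_nat_add_one_cpow_neg_riemannZeta {z : ℂ} (hz : 1 < z.re) :
    HasSum (fun m : ℕ => ((m : ℂ) + 1) ^ (-z)) (riemannZeta z) := by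
  simp only [cpow_neg, ← one_div]
  rw [zeta_eq_tsum_one_div_nat_add_one_cpow hz]
  refine Summable.hasSum ?_
  exact_mod_cast (summable_nat_add_iff 1).mpr (summable_one_div_nat_cpow.mpr hz)

theorem hasSum_pow_succ_mul_succ_cpow_neg {q : ℕ} (hq : 1 < q) {z : ℂ} (hz : 1 < z.re) :
    HasSum (fun p : ℕ × ℕ => ((q ^ (p.1 + 1) * (p.2 + 1) : ℕ) : ℂ) ^ (-z))
      ((q : ℂ) ^ (-z) / (1 - (q : ℂ) ^ (-z)) * riemannZeta z) := by
  have hgeom : HasSum (fun k : ℕ => ((q : ℂ) ^ (-z)) ^ (k + 1))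
      ((q : ℂ) ^ (-z) / (1 - (q : ℂ) ^ (-z))) :=
    hasSum_geometric_succ_of_norm_lt_one (norm_natCast_cpow_neg_lt_one hq (by linarith))
  have hzeta := hasSum_nat_add_one_cpow_neg_riemannZeta hz
  have hgeom_norm := summable_norm_iff.mpr hgeom.summable
  have hzeta_norm := summable_norm_iff.mpr hzeta.summable
  have hsummable := summable_mul_of_summable_norm hgeom_norm hzeta_norm
  have hprod := hgeom.mul hzeta hsummable
  have hterm (p : ℕ × ℕ) : ((q ^ (p.1 + 1) * (p.2 + 1) : ℕ) : ℂ) ^ (-z) =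
      ((q : ℂ) ^ (-z)) ^ (p.1 + 1) * ((p.2 : ℂ) + 1) ^ (-z) := by
    rw [Nat.cast_mul, natCast_mul_natCast_cpow, natCast_pow_cpow, Nat.cast_add_one]
  simp_rw [hterm]
  exact hprod

theorem hasSum_padicValNat_mul_cpow_neg {q : ℕ} (hq : 1 < q) {z : ℂ} (hz : 1 < z.re) :
    HasSum (fun m : ℕ => (padicValNat q (m + 1) : ℂ) * ((m : ℂ) + 1) ^ (-z))
      ((q : ℂ) ^ (-z) / (1 - (q : ℂ) ^ (-z)) * riemannZeta z) := by
  set e : ℕ × ℕ → ℕ := fun p => q ^ (p.1 + 1) * (p.2 + 1) - 1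
  have he (p : ℕ × ℕ) : e p + 1 = q ^ (p.1 + 1) * (p.2 + 1) := by
    have : 0 < q ^ (p.1 + 1) * (p.2 + 1) := by positivity
    simp only [e]
    omega
  have hfiber (n : ℕ) : (padicValNat q (n + 1) : ℂ) * ((n : ℂ) + 1) ^ (-z) =
      ∑' p : e ⁻¹' {n}, ((q ^ (p.1.1 + 1) * (p.1.2 + 1) : ℕ) : ℂ) ^ (-z) := by
    have hcard : Nat.card (e ⁻¹' {n}) = padicValNat q (n + 1) := by
      rw [← Nat.card_pow_succ_mul_succ_eq hq n.succ_ne_zero]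
      exact Nat.card_congr (Equiv.subtypeEquivRight fun p => by
        simp only [Set.mem_preimage, Set.mem_singleton_iff, ← he]; omega)
    calc (padicValNat q (n + 1) : ℂ) * ((n : ℂ) + 1) ^ (-z)
        = ∑' _ : e ⁻¹' {n}, ((n : ℂ) + 1) ^ (-z) := by rw [tsum_const, hcard, nsmul_eq_mul]
      _ = _ := tsum_congr fun ⟨p, hp⟩ => by
        rw [← he, show e p = n from hp, Nat.cast_add_one]
  simp_rw [hfiber]
  exact (hasSum_pow_succ_mul_succ_cpow_neg hq hz).tsum_fiberwise e

theorem hasSum_digits_sum_sub_mul_cpow_neg {q : ℕ} (hq : 1 < q) {z : ℂ} (hz : 1 < z.re) :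
    HasSum (fun m : ℕ =>
      (((q.digits (m + 1)).sum : ℂ) - ((q.digits m).sum : ℂ)) * ((m : ℂ) + 1) ^ (-z))
      ((1 - (q : ℂ) ^ ((1 : ℂ) - z)) / (1 - (q : ℂ) ^ (-z)) * riemannZeta z) := by
  have hterm (m : ℕ) : (((q.digits (m + 1)).sum : ℂ) - ((q.digits m).sum : ℂ)) *
      ((m : ℂ) + 1) ^ (-z) = ((m : ℂ) + 1) ^ (-z) -
        ((q : ℂ) - 1) * ((padicValNat q (m + 1) : ℂ) * ((m : ℂ) + 1) ^ (-z)) := by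
    have := congrArg (Nat.cast : ℕ → ℂ) (Nat.digits_sum_succ_add_mul_padicValNat hq m)
    simp only [Nat.cast_add, Nat.cast_mul, Nat.cast_sub hq.le, Nat.cast_one] at this
    linear_combination ((m : ℂ) + 1) ^ (-z) * this
  have hr : 1 - (q : ℂ) ^ (-z) ≠ 0 := sub_ne_zero.mpr fun h => by
    simpa [← h] using norm_natCast_cpow_neg_lt_one hq (z := z) (by linarith)
  have hvalue : (1 - (q : ℂ) ^ ((1 : ℂ) - z)) / (1 - (q : ℂ) ^ (-z)) * riemannZeta z =
      riemannZeta z - ((q : ℂ) - 1) * ((q : ℂ) ^ (-z) / (1 - (q : ℂ) ^ (-z)) * riemannZeta z) := by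
    rw [sub_eq_add_neg (1 : ℂ) z, cpow_add _ _ (by exact_mod_cast (by omega : q ≠ 0)), cpow_one]
    field_simp
    ring
  simp_rw [hterm, hvalue]
  exact (hasSum_nat_add_one_cpow_neg_riemannZeta hz).sub
    ((hasSum_padicValNat_mul_cpow_neg hq hz).mul_left ((q : ℂ) - 1))

/-- Let `q ≥ 2` and let `s_q(n) = (Nat.digits q n).sum` be the `q`-ary sum of digits.
The Dirichlet series `D(z) = Σ_{m≥1} (s_q(m) − s_q(m−1)) m^{−z}`, absolutely convergent for
`Re z > 1`, satisfies `D(z) = ((1 − q^{1−z})/(1 − q^{−z})) ζ(z)`. -/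
theorem stmt5 (q : ℕ) (hq : 2 ≤ q) (z : ℂ) (hz : 1 < z.re) :
    Summable (fun m : ℕ =>
      ‖(((Nat.digits q (m + 1)).sum : ℂ) - ((Nat.digits q m).sum : ℂ)) *
        ((m : ℂ) + 1) ^ (-z)‖) ∧
    ∑' m : ℕ, (((Nat.digits q (m + 1)).sum : ℂ) - ((Nat.digits q m).sum : ℂ)) *
        ((m : ℂ) + 1) ^ (-z)
      = ((1 - (q : ℂ) ^ ((1 : ℂ) - z)) / (1 - (q : ℂ) ^ (-z))) * riemannZeta z := by
  have hD := hasSum_digits_sum_sub_mul_cpow_neg (by omega : 1 < q) hz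
  exact ⟨summable_norm_iff.mpr hD.summable, hD.tsum_eq⟩
end

section
/- Let Ψ_1 : ℝ → ℝ be the p-periodic continuous fluctuation of the expected output sum of a complete deterministic subsequential transducer (as in the main theorem of the paper). Then for every α ∈ (0,1), Ψ_1 satisfies a Hölder condition of order α: there exists C > 0 such that |Ψ_1(y) − Ψ_1(x)| ≤ C|y − x|^α for all x, y ∈ ℝ. -/
/-!
Write `Ψ x = -e_T {x} - q^{-d{x}} W x` with `W = fluctSeries`. The `m`-th summand of `W` is
`O(m q^{-m})`, hence `O(ρ^m)` with `ρ = q^{-α}`, and it depends on `x` only through `⌊x⌋` and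
the digit prefix `(x₀…x_m)_q`. For `x ≤ y` in one unit interval put `h = y - x` and pick `M`
with `q^M ≤ 1/h < q^{M+1}`. Where `(x₀…x_M)_q` is constant, `W` moves by at most a tail
`O(ρ^{M+1}) = O(h^α)`. Across `[x, y]` this prefix takes at most `q² + 1` values, and `W` is
continuous on `[⌊x⌋, ⌊x⌋ + 1)` because `Ψ` is, so the tail bounds chain to
`‖W y - W x‖ = O(h^α)`. Continuity of `Ψ` at the integers and its boundedness then give the
estimate on all of `ℝ`.
-/

open Set Filter Topology

section Seminormed

variable {E : Type*} [SeminormedAddCommGroup E]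

theorem norm_sub_le_of_mem_closure {X : Type*} [TopologicalSpace X] {g : X → E} {T : Set X}
    {t : X} {c : E} {B : ℝ} (hg : ContinuousWithinAt g T t) (ht : t ∈ closure T)
    (hB : ∀ s ∈ T, ‖g s - c‖ ≤ B) : ‖g t - c‖ ≤ B := by
  have hT : g '' T ⊆ Metric.closedBall c B := by
    rintro _ ⟨s, hs, rfl⟩
    simpa [dist_eq_norm] using hB s hs
  simpa [dist_eq_norm] using closure_minimal hT Metric.isClosed_closedBall (hg.mem_closure_image ht)

theorem MonotoneOn.exists_levelSet_boundary {α β : Type*} [ConditionallyCompleteLinearOrder α]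
    [PartialOrder β] {φ : α → β} {x y : α} (hφ : MonotoneOn φ (Icc x y)) (hxy : x ≤ y) :
    ∃ t ∈ Icc x y, (∀ s ∈ Ico x t, φ s = φ x) ∧ ∀ s ∈ Ioc t y, φ x < φ s := by
  set S := {s ∈ Icc x y | φ s = φ x}
  have hx : x ∈ Icc x y := ⟨le_rfl, hxy⟩
  have hSne : S.Nonempty := ⟨x, hx, rfl⟩
  have hSbdd : BddAbove S := ⟨y, fun s hs => hs.1.2⟩
  have hxt : x ≤ sSup S := le_csSup hSbdd ⟨hx, rfl⟩
  have hty : sSup S ≤ y := csSup_le hSne fun s hs => hs.1.2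
  refine ⟨sSup S, ⟨hxt, hty⟩, fun s hs => ?_, fun s hs => ?_⟩
  · obtain ⟨s', hs', hss'⟩ := exists_lt_of_lt_csSup hSne hs.2
    have hs_mem : s ∈ Icc x y := ⟨hs.1, hs.2.le.trans hty⟩
    exact le_antisymm (hs'.2 ▸ hφ hs_mem hs'.1 hss'.le) (hφ hx hs_mem hs.1)
  · have hs_mem : s ∈ Icc x y := ⟨hxt.trans hs.1.le, hs.2⟩
    exact (hφ hx hs_mem hs_mem.1).lt_of_ne fun h => (le_csSup hSbdd ⟨hs_mem, h.symm⟩).not_gt hs.1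

-- Induct on `k`: cut `[x, y]` where `φ` leaves the value `φ x`; continuity of `g` at the cut
-- joins the bound `B` to its left with the inductive bound to its right.
theorem norm_sub_le_of_monotoneOn_of_levelSet {g : ℝ → E} {φ : ℝ → ℕ} {B x y : ℝ}
    (hg : ContinuousOn g (Icc x y)) (hφ : MonotoneOn φ (Icc x y))
    (hB : ∀ s ∈ Icc x y, ∀ t ∈ Icc x y, φ s = φ t → ‖g s - g t‖ ≤ B) (hxy : x ≤ y) (k : ℕ)
    (hk : φ y ≤ φ x + k) : ‖g y - g x‖ ≤ (k + 1) * B := by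
  have hy : y ∈ Icc x y := ⟨hxy, le_rfl⟩
  suffices ∀ k : ℕ, ∀ x' ∈ Icc x y, φ y ≤ φ x' + k → ‖g y - g x'‖ ≤ (k + 1) * B from
    this k x ⟨le_rfl, hxy⟩ hk
  intro k
  induction k with
  | zero =>
    intro x' hx' hk
    simpa using hB y hy x' hx' (le_antisymm (by simpa using hk) (hφ hx' hy hx'.2))
  | succ k ih =>
    intro x' hx' hk
    have hB0 : 0 ≤ B := by simpa using hB x' hx' x' hx' rfl
    have hIcc : Icc x' y ⊆ Icc x y := Icc_subset_Icc_left hx'.1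
    obtain ⟨t, ⟨hxt, hty⟩, hbefore, hafter⟩ := (hφ.mono hIcc).exists_levelSet_boundary hx'.2
    have hcont : ContinuousWithinAt g (Icc x y) t := hg t (hIcc ⟨hxt, hty⟩)
    have hleft : ‖g t - g x'‖ ≤ B := by
      rcases hxt.eq_or_lt with hxt | hxt
      · simpa [← hxt] using hB0
      have hsub : Ico x' t ⊆ Icc x y := fun s hs => hIcc ⟨hs.1, hs.2.le.trans hty⟩
      exact norm_sub_le_of_mem_closure (hcont.mono hsub)
        (by rw [closure_Ico hxt.ne]; exact ⟨hxt.le, le_rfl⟩)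
        fun s hs => hB s (hsub hs) x' hx' (hbefore s hs)
    have hright : ‖g t - g y‖ ≤ (k + 1) * B := by
      rcases hty.eq_or_lt with hty | hty
      · simpa [hty] using mul_nonneg (by positivity : (0 : ℝ) ≤ k + 1) hB0
      have hsub : Ioc t y ⊆ Icc x y := fun s hs => hIcc ⟨hxt.trans hs.1.le, hs.2⟩
      refine norm_sub_le_of_mem_closure (hcont.mono hsub)
        (by rw [closure_Ioc hty.ne]; exact ⟨le_rfl, hty.le⟩) fun s hs => ?_
      rw [norm_sub_rev]
      exact ih s (hsub hs) (by have := hafter s hs; omega)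
    calc ‖g y - g x'‖ ≤ ‖g t - g y‖ + ‖g t - g x'‖ := by
          rw [← norm_neg (g t - g y)]
          exact (norm_add_le _ _).trans_eq' (by congr 1; abel)
      _ ≤ (k + 1) * B + B := add_le_add hright hleft
      _ = ((k + 1 : ℕ) + 1) * B := by push_cast; ring

theorem norm_sub_le_of_le_floor_add_one {Ψ : ℝ → E} {α C : ℝ} (hcont : Continuous Ψ)
    (hα : 0 ≤ α) (hC : ∀ x y, x ≤ y → ⌊x⌋ = ⌊y⌋ → ‖Ψ y - Ψ x‖ ≤ C * (y - x) ^ α)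
    {x y : ℝ} (hxy : x ≤ y) (hy : y ≤ ⌊x⌋ + 1) : ‖Ψ y - Ψ x‖ ≤ C * (y - x) ^ α := by
  have hsub : Ico x (⌊x⌋ + 1) ⊆ {s | ‖Ψ s - Ψ x‖ ≤ C * (s - x) ^ α} := fun s hs =>
    hC x s hs.1 (Int.floor_eq_iff.2 ⟨(Int.floor_le x).trans hs.1, hs.2⟩).symm
  have hclosed : IsClosed {s | ‖Ψ s - Ψ x‖ ≤ C * (s - x) ^ α} :=
    isClosed_le (by fun_prop) (continuous_const.mul
      ((continuous_id.sub continuous_const).rpow_const fun _ => Or.inr hα))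
  refine closure_minimal hsub hclosed ?_
  rw [closure_Ico (Int.lt_floor_add_one x).ne]
  exact ⟨hxy, hy⟩

theorem norm_sub_le_of_le_add_one {Ψ : ℝ → E} {α C : ℝ} (hcont : Continuous Ψ) (hα : 0 ≤ α)
    (hC0 : 0 ≤ C) (hC : ∀ x y, x ≤ y → ⌊x⌋ = ⌊y⌋ → ‖Ψ y - Ψ x‖ ≤ C * (y - x) ^ α)
    {x y : ℝ} (hxy : x ≤ y) (hy : y ≤ x + 1) : ‖Ψ y - Ψ x‖ ≤ 2 * C * (y - x) ^ α := by
  rcases le_or_gt y (⌊x⌋ + 1) with hyx | hyx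
  · have hpow : 0 ≤ C * (y - x) ^ α := mul_nonneg hC0 (by bound)
    linarith [norm_sub_le_of_le_floor_add_one hcont hα hC hxy hyx]
  set z : ℝ := ((⌊x⌋ + 1 : ℤ) : ℝ)
  have hfloor : ⌊z⌋ = ⌊x⌋ + 1 := Int.floor_intCast _
  have hz : z = ⌊x⌋ + 1 := by push_cast [z]; ring
  clear_value z
  have hxz : x ≤ z := by linarith [Int.lt_floor_add_one x]
  have hzy : z ≤ y := by linarith
  have h₁ := norm_sub_le_of_le_floor_add_one hcont hα hC hxz hz.le
  have h₂ := norm_sub_le_of_le_floor_add_one hcont hα hC hzy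
    (by rw [hfloor]; push_cast; linarith [Int.floor_le x])
  calc ‖Ψ y - Ψ x‖ ≤ ‖Ψ y - Ψ z‖ + ‖Ψ z - Ψ x‖ := norm_sub_le_norm_sub_add_norm_sub _ _ _
    _ ≤ C * (y - z) ^ α + C * (z - x) ^ α := add_le_add h₂ h₁
    _ ≤ C * (y - x) ^ α + C * (y - x) ^ α := by gcongr
    _ = 2 * C * (y - x) ^ α := by ring

theorem exists_holder_of_holder_of_floor_eq {Ψ : ℝ → E} {α C M : ℝ} (hcont : Continuous Ψ)
    (hα : 0 ≤ α) (hC0 : 0 ≤ C) (hM : ∀ x, ‖Ψ x‖ ≤ M)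
    (hC : ∀ x y, x ≤ y → ⌊x⌋ = ⌊y⌋ → ‖Ψ y - Ψ x‖ ≤ C * (y - x) ^ α) :
    ∃ C', 0 < C' ∧ ∀ x y, ‖Ψ y - Ψ x‖ ≤ C' * |y - x| ^ α := by
  have hM0 : 0 ≤ M := (norm_nonneg _).trans (hM 0)
  have hordered : ∀ x y : ℝ, x ≤ y → ‖Ψ y - Ψ x‖ ≤ (2 * C + 2 * M) * (y - x) ^ α := by
    intro x y hxy
    rcases le_or_gt y (x + 1) with hy | hy
    · have := norm_sub_le_of_le_add_one hcont hα hC0 hC hxy hy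
      nlinarith [mul_nonneg hM0 (by bound : (0 : ℝ) ≤ (y - x) ^ α)]
    · have h1 : 1 ≤ (y - x) ^ α := Real.one_le_rpow (by linarith) hα
      calc ‖Ψ y - Ψ x‖ ≤ M + M := (norm_sub_le _ _).trans (add_le_add (hM y) (hM x))
        _ ≤ (2 * C + 2 * M) * (y - x) ^ α := by nlinarith
  refine ⟨2 * C + 2 * M + 1, by positivity, fun x y => ?_⟩
  rcases le_total x y with hxy | hyx
  · rw [abs_of_nonneg (sub_nonneg.2 hxy)]
    linarith [hordered x y hxy, (by bound : (0 : ℝ) ≤ (y - x) ^ α)]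
  · rw [norm_sub_rev, abs_sub_comm, abs_of_nonneg (sub_nonneg.2 hyx)]
    linarith [hordered y x hyx, (by bound : (0 : ℝ) ≤ (x - y) ^ α)]

theorem norm_tsum_le_of_le_geometric {a : ℕ → E} {D ρ : ℝ} (hρ0 : 0 ≤ ρ) (hρ1 : ρ < 1)
    (ha : ∀ m, ‖a m‖ ≤ D * ρ ^ m) : ‖∑' m, a m‖ ≤ D / (1 - ρ) := by
  simpa [div_eq_mul_inv] using
    tsum_of_norm_bounded ((hasSum_geometric_of_lt_one hρ0 hρ1).mul_left D) ha

end Seminormed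

theorem norm_tsum_sub_tsum_le_of_eq_of_le {E : Type*} [NormedAddCommGroup E] [CompleteSpace E]
    {a b : ℕ → E} {D ρ : ℝ} (hρ0 : 0 ≤ ρ) (hρ1 : ρ < 1)
    (ha : ∀ m, ‖a m‖ ≤ D * ρ ^ m) (hb : ∀ m, ‖b m‖ ≤ D * ρ ^ m) {M : ℕ}
    (hab : ∀ m ≤ M, a m = b m) : ‖∑' m, a m - ∑' m, b m‖ ≤ 2 * D * ρ ^ (M + 1) / (1 - ρ) := by
  have hsum : ∀ c : ℕ → E, (∀ m, ‖c m‖ ≤ D * ρ ^ m) → Summable c := fun c hc =>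
    .of_norm_bounded ((summable_geometric_of_lt_one hρ0 hρ1).mul_left D) hc
  have hsplit : ∑' m, a m - ∑' m, b m = ∑' i, (a (i + (M + 1)) - b (i + (M + 1))) := by
    rw [← (hsum a ha).tsum_sub (hsum b hb),
      ← ((hsum a ha).sub (hsum b hb)).sum_add_tsum_nat_add (M + 1),
      Finset.sum_eq_zero fun m hm => sub_eq_zero.2 (hab m (by simpa [Nat.lt_succ_iff] using hm)),
      zero_add]
  rw [hsplit]
  refine norm_tsum_le_of_le_geometric hρ0 hρ1 fun i => (norm_sub_le _ _).trans ?_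
  calc ‖a (i + (M + 1))‖ + ‖b (i + (M + 1))‖ ≤ D * ρ ^ (i + (M + 1)) + D * ρ ^ (i + (M + 1)) :=
        add_le_add (ha _) (hb _)
    _ = 2 * D * ρ ^ (M + 1) * ρ ^ i := by ring

theorem exists_affine_mul_pow_le {σ : ℝ} (hσ0 : 0 ≤ σ) (hσ1 : σ < 1) (a b : ℝ) :
    ∃ D, ∀ m : ℕ, (a * m + b) * σ ^ m ≤ D := by
  have h : Tendsto (fun m : ℕ => (a * m + b) * σ ^ m) atTop (𝓝 (a * 0 + b * 0)) := by
    simp_rw [add_mul, mul_assoc]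
    exact ((tendsto_self_mul_const_pow_of_lt_one hσ0 hσ1).const_mul a).add
      ((tendsto_pow_atTop_nhds_zero_of_lt_one hσ0 hσ1).const_mul b)
  obtain ⟨D, hD⟩ := h.bddAbove_range
  exact ⟨D, fun m => hD ⟨m, rfl⟩⟩

theorem exists_pow_mul_le_one_and_pow_le_rpow {q h α : ℝ} (hq : 1 < q) (hh0 : 0 < h)
    (hh1 : h ≤ 1) (hα : 0 ≤ α) : ∃ M : ℕ, q ^ M * h ≤ 1 ∧ (q⁻¹ ^ α) ^ (M + 1) ≤ h ^ α := by
  obtain ⟨M, hqM, hqM1⟩ := exists_nat_pow_near (one_le_inv₀ hh0 |>.2 hh1) hq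
  have hqinv0 : 0 ≤ q⁻¹ := by positivity
  refine ⟨M, by simpa [hh0.ne'] using mul_le_mul_of_nonneg_right hqM hh0.le, ?_⟩
  rw [← Real.rpow_natCast, ← Real.rpow_mul hqinv0, mul_comm, Real.rpow_mul hqinv0,
    Real.rpow_natCast, inv_pow]
  exact Real.rpow_le_rpow (by positivity) (inv_le_of_inv_le₀ hh0 hqM1.le) hα

theorem abs_rpow_neg_mul_sub_le {b c u v : ℝ} (hb : 1 ≤ b) (hc : 0 ≤ c) (hu : 0 ≤ u)
    (huv : u ≤ v) :
    |b ^ (-c * v) - b ^ (-c * u)| ≤ c * Real.log b * (v - u) := by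
  have hb0 : 0 < b := by linarith
  have hsplit : b ^ (-c * v) = b ^ (-c * u) * Real.exp (-(c * Real.log b * (v - u))) := by
    rw [Real.rpow_def_of_pos hb0, Real.rpow_def_of_pos hb0, ← Real.exp_add]
    ring_nf
  have hbu0 : 0 ≤ b ^ (-c * u) := by positivity
  have hbu1 : b ^ (-c * u) ≤ 1 := Real.rpow_le_one_of_one_le_of_nonpos hb (by nlinarith)
  have ht : 0 ≤ c * Real.log b * (v - u) := by
    have := Real.log_nonneg hb
    have := sub_nonneg.2 huv
    positivity
  have hexp1 : Real.exp (-(c * Real.log b * (v - u))) ≤ 1 := Real.exp_le_one_iff.2 (by linarith)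
  have hexp2 := Real.add_one_le_exp (-(c * Real.log b * (v - u)))
  rw [hsplit, abs_of_nonpos (by nlinarith)]
  nlinarith

/-- `(x₀x₁…xₘ)_q`, the integer formed by the leading `m + 1` base-`q` digits of `q ^ {x}`. -/
noncomputable def digitPrefix (q m : ℕ) (x : ℝ) : ℕ := ⌊(q : ℝ) ^ (Int.fract x + m)⌋₊

section digitPrefix

variable {q : ℕ}

theorem one_le_digitPrefix (hq : 1 ≤ q) (m : ℕ) (x : ℝ) : 1 ≤ digitPrefix q m x :=
  Nat.le_floor (by
    simpa using Real.one_le_rpow (by exact_mod_cast hq) (by positivity [Int.fract_nonneg x]))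

theorem digitPrefix_le (hq : 1 ≤ q) (m : ℕ) (x : ℝ) :
    (digitPrefix q m x : ℝ) ≤ (q : ℝ) ^ (m + 1) := by
  refine (Nat.floor_le (by positivity)).trans ?_
  rw [← Real.rpow_natCast]
  exact Real.rpow_le_rpow_of_exponent_le (by exact_mod_cast hq)
    (by push_cast; linarith [Int.fract_lt_one x])

theorem digitPrefix_eq_div (hq : 0 < q) (m k : ℕ) (x : ℝ) :
    digitPrefix q m x = digitPrefix q (m + k) x / q ^ k := by
  have hq' : (0 : ℝ) < q := by exact_mod_cast hq
  rw [digitPrefix, digitPrefix, ← Nat.floor_div_natCast, Nat.cast_pow, ← Real.rpow_natCast,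
    ← Real.rpow_sub hq']
  push_cast
  ring_nf

theorem monotoneOn_digitPrefix (hq : 1 ≤ q) (m : ℕ) (n : ℤ) :
    MonotoneOn (digitPrefix q m) (Ico (n : ℝ) (n + 1)) := fun s hs t ht hst => by
  refine Nat.floor_mono (Real.rpow_le_rpow_of_exponent_le (by exact_mod_cast hq) ?_)
  rw [Int.fract, Int.fract, Int.floor_eq_iff.2 hs, Int.floor_eq_iff.2 ht]
  linarith

theorem digitPrefix_le_add (hq : 1 ≤ q) {M : ℕ} {x y : ℝ} (hxy : x ≤ y)
    (hfloor : ⌊x⌋ = ⌊y⌋) (hM : (q : ℝ) ^ M * (y - x) ≤ 1) :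
    digitPrefix q M y ≤ digitPrefix q M x + q * q := by
  have hq1 : (1 : ℝ) ≤ q := by exact_mod_cast hq
  have hh : Int.fract y - Int.fract x = y - x := by
    rw [Int.fract, Int.fract, hfloor]; ring
  have hh1 : y - x ≤ 1 := by
    linarith [Int.fract_lt_one y, Int.fract_nonneg x]
  have hsplit : (q : ℝ) ^ (Int.fract y + M) =
      (q : ℝ) ^ Int.fract x * (q : ℝ) ^ M * (q : ℝ) ^ (y - x) := by
    rw [← Real.rpow_natCast, ← Real.rpow_add (by positivity), ← Real.rpow_add (by positivity)]
    congr 1; linarith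
  have hbern : (q : ℝ) ^ (y - x) ≤ 1 + (y - x) * (q - 1) := by
    simpa using rpow_one_add_le_one_add_mul_self (s := (q : ℝ) - 1) (by linarith)
      (sub_nonneg.2 hxy) hh1
  have hfx : (q : ℝ) ^ Int.fract x ≤ q := by
    simpa using Real.rpow_le_rpow_of_exponent_le hq1 (Int.fract_lt_one x).le
  have hgrowth : (q : ℝ) ^ (Int.fract y + M) ≤ (q : ℝ) ^ (Int.fract x + M) + q * (q - 1) := by
    rw [hsplit, Real.rpow_add (by positivity), Real.rpow_natCast]
    calc (q : ℝ) ^ Int.fract x * (q : ℝ) ^ M * (q : ℝ) ^ (y - x)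
        ≤ (q : ℝ) ^ Int.fract x * (q : ℝ) ^ M * (1 + (y - x) * (q - 1)) := by gcongr
      _ = (q : ℝ) ^ Int.fract x * (q : ℝ) ^ M
            + (q : ℝ) ^ Int.fract x * ((q : ℝ) ^ M * (y - x)) * (q - 1) := by ring
      _ ≤ (q : ℝ) ^ Int.fract x * (q : ℝ) ^ M + q * 1 * (q - 1) := by gcongr
      _ = (q : ℝ) ^ Int.fract x * (q : ℝ) ^ M + q * (q - 1) := by ring
  have hlt : (digitPrefix q M y : ℝ) < digitPrefix q M x + q * q + 1 := by
    have hy := Nat.floor_le (by positivity : (0 : ℝ) ≤ (q : ℝ) ^ (Int.fract y + M))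
    have hx := Nat.lt_floor_add_one ((q : ℝ) ^ (Int.fract x + M))
    rw [digitPrefix, digitPrefix]
    nlinarith
  exact_mod_cast Nat.lt_add_one_iff.1 (by exact_mod_cast hlt)

end digitPrefix

noncomputable def fluctSummand (q d p : ℕ) (f : ℕ → ℕ → ℂ) (l m : ℕ) (x : ℝ) : ℂ :=
  (((q : ℝ) ^ (-(d : ℝ) * (m : ℝ)) : ℝ) : ℂ) *
    Complex.exp (2 * Real.pi * Complex.I * (l : ℂ) * (((⌊x⌋ : ℤ) : ℂ) - (m : ℂ)) / (p : ℂ)) *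
    f l (digitPrefix q m x)

section fluctSummand

variable {q d p : ℕ} {f : ℕ → ℕ → ℂ} {K : ℝ}

theorem norm_fluctSummand (hq : 0 < q) (l m : ℕ) (x : ℝ) :
    ‖fluctSummand q d p f l m x‖ = ((q : ℝ) ^ (d * m))⁻¹ * ‖f l (digitPrefix q m x)‖ := by
  have hexp : 2 * Real.pi * Complex.I * (l : ℂ) * (((⌊x⌋ : ℤ) : ℂ) - (m : ℂ)) / (p : ℂ) =
      ((2 * Real.pi * l * ((⌊x⌋ : ℝ) - m) / p : ℝ) : ℂ) * Complex.I := by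
    push_cast; ring
  rw [fluctSummand, norm_mul, norm_mul, hexp, Complex.norm_exp_ofReal_mul_I, Complex.norm_real,
    Real.norm_of_nonneg (by positivity), neg_mul, Real.rpow_neg (by positivity), ← Nat.cast_mul,
    Real.rpow_natCast, mul_one]

theorem norm_fluctSummand_le (hq : 1 ≤ q) (hd : 1 ≤ d)
    (hf : ∀ l r : ℕ, 1 ≤ r → ‖f l r‖ ≤ K * (r : ℝ) ^ (d - 1) * (Real.log r + 1))
    (l m : ℕ) (x : ℝ) :
    ‖fluctSummand q d p f l m x‖ ≤
      K * (q : ℝ) ^ (d - 1) * (Real.log q * m + (Real.log q + 1)) * ((q : ℝ)⁻¹) ^ m := by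
  obtain ⟨e, rfl⟩ : ∃ e, d = e + 1 := ⟨d - 1, by omega⟩
  have hq0 : (0 : ℝ) < q := by exact_mod_cast hq
  have hK : 0 ≤ K := by simpa using (norm_nonneg _).trans (hf 0 1 le_rfl)
  set r := digitPrefix q m x
  have hr1 : (1 : ℝ) ≤ r := by exact_mod_cast one_le_digitPrefix hq m x
  have hrq : (r : ℝ) ≤ (q : ℝ) ^ (m + 1) := digitPrefix_le hq m x
  have hlog : Real.log r ≤ (m + 1) * Real.log q := by
    simpa using Real.log_le_log (by positivity) hrq
  rw [norm_fluctSummand (by omega), Nat.add_sub_cancel]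
  calc ((q : ℝ) ^ ((e + 1) * m))⁻¹ * ‖f l r‖
      ≤ ((q : ℝ) ^ ((e + 1) * m))⁻¹ *
          (K * ((q : ℝ) ^ (m + 1)) ^ e * ((m + 1) * Real.log q + 1)) := by
        gcongr
        refine (hf l r (by exact_mod_cast hr1)).trans ?_
        simp only [Nat.add_sub_cancel]
        gcongr
    _ = K * (q : ℝ) ^ e * (Real.log q * m + (Real.log q + 1)) * ((q : ℝ)⁻¹) ^ m := by
        rw [inv_pow, ← pow_mul]
        field_simp
        ring

theorem exists_norm_fluctSummand_le (hq : 1 ≤ q) (hd : 1 ≤ d)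
    (hf : ∀ l r : ℕ, 1 ≤ r → ‖f l r‖ ≤ K * (r : ℝ) ^ (d - 1) * (Real.log r + 1))
    {ρ : ℝ} (hρ : (q : ℝ)⁻¹ < ρ) : ∃ D, ∀ l m x, ‖fluctSummand q d p f l m x‖ ≤ D * ρ ^ m := by
  have hρ0 : 0 < ρ := (by positivity : (0 : ℝ) ≤ (q : ℝ)⁻¹).trans_lt hρ
  obtain ⟨D, hD⟩ := exists_affine_mul_pow_le (by positivity) ((div_lt_one hρ0).2 hρ)
    (Real.log q) (Real.log q + 1)
  have hK : 0 ≤ K := by simpa using (norm_nonneg _).trans (hf 0 1 le_rfl)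
  refine ⟨K * (q : ℝ) ^ (d - 1) * D, fun l m x => (norm_fluctSummand_le hq hd hf l m x).trans ?_⟩
  calc K * (q : ℝ) ^ (d - 1) * (Real.log q * m + (Real.log q + 1)) * ((q : ℝ)⁻¹) ^ m
      = K * (q : ℝ) ^ (d - 1) * ((Real.log q * m + (Real.log q + 1)) * ((q : ℝ)⁻¹ / ρ) ^ m)
          * ρ ^ m := by
        rw [div_pow]; field_simp
    _ ≤ K * (q : ℝ) ^ (d - 1) * D * ρ ^ m := by gcongr; exact hD m

theorem fluctSummand_eq_of_digitPrefix_eq (hq : 0 < q) {M : ℕ} {s t : ℝ} (hfloor : ⌊s⌋ = ⌊t⌋)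
    (hdigits : digitPrefix q M s = digitPrefix q M t) (l : ℕ) {m : ℕ} (hm : m ≤ M) :
    fluctSummand q d p f l m s = fluctSummand q d p f l m t := by
  obtain ⟨k, rfl⟩ := Nat.exists_eq_add_of_le hm
  rw [fluctSummand, fluctSummand, hfloor, digitPrefix_eq_div hq m k s, digitPrefix_eq_div hq m k t,
    hdigits]

end fluctSummand

noncomputable def fluctSeries (q d p : ℕ) (f : ℕ → ℕ → ℂ) (x : ℝ) : ℂ :=
  ∑ l ∈ Finset.range p, ∑' m : ℕ, fluctSummand q d p f l m x

section fluctSeries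

variable {q d p : ℕ} {f : ℕ → ℕ → ℂ} {D ρ : ℝ}

theorem norm_fluctSeries_le (hρ0 : 0 ≤ ρ) (hρ1 : ρ < 1)
    (hD : ∀ l m x, ‖fluctSummand q d p f l m x‖ ≤ D * ρ ^ m) (x : ℝ) :
    ‖fluctSeries q d p f x‖ ≤ p * (D / (1 - ρ)) := by
  refine (norm_sum_le _ _).trans ?_
  simpa using Finset.sum_le_sum fun l (_ : l ∈ Finset.range p) =>
    norm_tsum_le_of_le_geometric hρ0 hρ1 (hD l · x)

theorem norm_fluctSeries_sub_le_of_digitPrefix_eq (hq : 0 < q) (hρ0 : 0 ≤ ρ) (hρ1 : ρ < 1)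
    (hD : ∀ l m x, ‖fluctSummand q d p f l m x‖ ≤ D * ρ ^ m) {M : ℕ} {s t : ℝ}
    (hfloor : ⌊s⌋ = ⌊t⌋) (hdigits : digitPrefix q M s = digitPrefix q M t) :
    ‖fluctSeries q d p f s - fluctSeries q d p f t‖ ≤ p * (2 * D * ρ ^ (M + 1) / (1 - ρ)) := by
  rw [fluctSeries, fluctSeries, ← Finset.sum_sub_distrib]
  refine (norm_sum_le _ _).trans ?_
  simpa using Finset.sum_le_sum fun l (_ : l ∈ Finset.range p) =>
    norm_tsum_sub_tsum_le_of_eq_of_le hρ0 hρ1 (hD l · s) (hD l · t)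
      fun m hm => fluctSummand_eq_of_digitPrefix_eq hq hfloor hdigits l hm

theorem exists_norm_fluctSeries_le {K : ℝ} (hq : 2 ≤ q) (hd : 1 ≤ d)
    (hf : ∀ l r : ℕ, 1 ≤ r → ‖f l r‖ ≤ K * (r : ℝ) ^ (d - 1) * (Real.log r + 1)) :
    ∃ B, ∀ x, ‖fluctSeries q d p f x‖ ≤ B := by
  obtain ⟨ρ, hqρ, hρ1⟩ :=
    exists_between (inv_lt_one_of_one_lt₀ (by exact_mod_cast hq : (1 : ℝ) < q))
  obtain ⟨D, hD⟩ := exists_norm_fluctSummand_le (p := p) (by omega) hd hf hqρ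
  exact ⟨_, norm_fluctSeries_le ((by positivity : (0 : ℝ) ≤ (q : ℝ)⁻¹).trans hqρ.le) hρ1 hD⟩

end fluctSeries

noncomputable def fluctuation (q d p : ℕ) (f : ℕ → ℕ → ℂ) (eT x : ℝ) : ℂ :=
  -(eT : ℂ) * ((Int.fract x : ℝ) : ℂ)
    - (((q : ℝ) ^ (-(d : ℝ) * Int.fract x) : ℝ) : ℂ) * fluctSeries q d p f x

section fluctuation

variable {q d p : ℕ} {f : ℕ → ℕ → ℂ} {eT : ℝ}

theorem continuousOn_fluctSeries (hq : 0 < q) (hcont : Continuous (fluctuation q d p f eT))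
    (n : ℤ) : ContinuousOn (fluctSeries q d p f) (Ico (n : ℝ) (n + 1)) := by
  have hq' : (0 : ℝ) < q := by exact_mod_cast hq
  have hinv : ∀ x, fluctSeries q d p f x = (-(eT : ℂ) * ((Int.fract x : ℝ) : ℂ)
      - fluctuation q d p f eT x) * (((q : ℝ) ^ ((d : ℝ) * Int.fract x) : ℝ) : ℂ) := by
    intro x
    have hone : (((q : ℝ) ^ (-(d : ℝ) * Int.fract x) : ℝ) : ℂ) *
        (((q : ℝ) ^ ((d : ℝ) * Int.fract x) : ℝ) : ℂ) = 1 := by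
      rw [← Complex.ofReal_mul, ← Real.rpow_add hq']
      simp
    rw [fluctuation]
    linear_combination -fluctSeries q d p f x * hone
  rw [funext hinv]
  have hfract := continuousOn_fract (α := ℝ) n
  have hpow : ContinuousOn (fun x => (q : ℝ) ^ ((d : ℝ) * Int.fract x)) (Ico (n : ℝ) (n + 1)) :=
    continuousOn_const.rpow (continuousOn_const.mul hfract) fun _ _ => Or.inl hq'.ne'
  exact ((continuousOn_const.mul (Complex.continuous_ofReal.comp_continuousOn hfract)).sub
    hcont.continuousOn).mul (Complex.continuous_ofReal.comp_continuousOn hpow)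

theorem exists_holder_fluctSeries (hq : 2 ≤ q) (hd : 1 ≤ d) {K : ℝ}
    (hf : ∀ l r : ℕ, 1 ≤ r → ‖f l r‖ ≤ K * (r : ℝ) ^ (d - 1) * (Real.log r + 1))
    (hcont : Continuous (fluctuation q d p f eT))
    {α : ℝ} (hα0 : 0 < α) (hα1 : α < 1) :
    ∃ C, 0 ≤ C ∧ ∀ x y, x ≤ y → ⌊x⌋ = ⌊y⌋ →
      ‖fluctSeries q d p f y - fluctSeries q d p f x‖ ≤ C * (y - x) ^ α := by
  have hq1 : (1 : ℝ) < q := by exact_mod_cast hq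
  have hqinv0 : (0 : ℝ) < (q : ℝ)⁻¹ := by positivity
  have hqinv1 : (q : ℝ)⁻¹ < 1 := inv_lt_one_of_one_lt₀ hq1
  set ρ := (q : ℝ)⁻¹ ^ α
  have hρ0 : 0 ≤ ρ := by positivity
  have hρ1 : ρ < 1 := Real.rpow_lt_one hqinv0.le hqinv1 hα0
  obtain ⟨D, hD⟩ := exists_norm_fluctSummand_le (p := p) (by omega) hd hf
    (Real.self_lt_rpow_of_lt_one hqinv0 hqinv1 hα1)
  have hD0 : 0 ≤ D := by simpa using (norm_nonneg _).trans (hD 0 0 0)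
  refine ⟨(q * q + 1) * (p * (2 * D / (1 - ρ))), by bound, fun x y hxy hfloor => ?_⟩
  rcases hxy.eq_or_lt with rfl | hxy
  · simp [Real.zero_rpow hα0.ne']
  have hh0 : 0 < y - x := sub_pos.2 hxy
  have hsub : Icc x y ⊆ Ico (⌊x⌋ : ℝ) (⌊x⌋ + 1) := fun s hs =>
    ⟨(Int.floor_le x).trans hs.1, hs.2.trans_lt (hfloor ▸ Int.lt_floor_add_one y)⟩
  have hh1 : y - x ≤ 1 := by linarith [(hsub ⟨hxy.le, le_rfl⟩).2, Int.floor_le x]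
  obtain ⟨M, hM, hρM⟩ := exists_pow_mul_le_one_and_pow_le_rpow hq1 hh0 hh1 hα0.le
  have hfloor_of_mem : ∀ s ∈ Icc x y, ⌊s⌋ = ⌊x⌋ := fun s hs => Int.floor_eq_iff.2 (hsub hs)
  have hjumps := norm_sub_le_of_monotoneOn_of_levelSet
    ((continuousOn_fluctSeries (by omega) hcont ⌊x⌋).mono hsub)
    ((monotoneOn_digitPrefix (by omega) M ⌊x⌋).mono hsub)
    (fun s hs t ht hst => norm_fluctSeries_sub_le_of_digitPrefix_eq (by omega) hρ0 hρ1 hD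
      ((hfloor_of_mem s hs).trans (hfloor_of_mem t ht).symm) hst)
    hxy.le (q * q) (digitPrefix_le_add (by omega) hxy.le hfloor hM)
  calc _ ≤ (((q * q : ℕ) : ℝ) + 1) * (p * (2 * D * ρ ^ (M + 1) / (1 - ρ))) := hjumps
    _ = (q * q + 1) * (p * (2 * D / (1 - ρ))) * ρ ^ (M + 1) := by push_cast; ring
    _ ≤ (q * q + 1) * (p * (2 * D / (1 - ρ))) * (y - x) ^ α := by gcongr

theorem norm_fluctuation_le (hq : 1 ≤ q) {B : ℝ} (hB : ∀ x, ‖fluctSeries q d p f x‖ ≤ B)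
    (x : ℝ) : ‖fluctuation q d p f eT x‖ ≤ |eT| + B := by
  have hc : ‖(((q : ℝ) ^ (-(d : ℝ) * Int.fract x) : ℝ) : ℂ)‖ ≤ 1 := by
    rw [Complex.norm_real, Real.norm_of_nonneg (by positivity)]
    exact Real.rpow_le_one_of_one_le_of_nonpos (by exact_mod_cast hq)
      (by nlinarith [Int.fract_nonneg x, (Nat.cast_nonneg d : (0 : ℝ) ≤ d)])
  refine (norm_sub_le _ _).trans (add_le_add ?_ ?_)
  · rw [norm_mul, norm_neg, Complex.norm_real, Complex.norm_real, Real.norm_eq_abs,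
      Real.norm_of_nonneg (Int.fract_nonneg x)]
    exact mul_le_of_le_one_right (abs_nonneg eT) (Int.fract_lt_one x).le
  · rw [norm_mul]
    exact (mul_le_of_le_one_left (norm_nonneg _) hc).trans (hB x)

theorem norm_fluctuation_sub_le (hq : 1 ≤ q) {B : ℝ} (hB : ∀ x, ‖fluctSeries q d p f x‖ ≤ B)
    {α C : ℝ} (hα1 : α ≤ 1)
    (hC : ∀ x y, x ≤ y → ⌊x⌋ = ⌊y⌋ →
      ‖fluctSeries q d p f y - fluctSeries q d p f x‖ ≤ C * (y - x) ^ α)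
    {x y : ℝ} (hxy : x ≤ y) (hfloor : ⌊x⌋ = ⌊y⌋) :
    ‖fluctuation q d p f eT y - fluctuation q d p f eT x‖ ≤
      (|eT| + C + d * Real.log q * B) * (y - x) ^ α := by
  set W := fluctSeries q d p f
  set c : ℝ → ℝ := fun u => (q : ℝ) ^ (-(d : ℝ) * u)
  have hfract : Int.fract y - Int.fract x = y - x := by
    rw [Int.fract, Int.fract, hfloor]; ring
  have hh0 : 0 ≤ y - x := sub_nonneg.2 hxy
  have hh : y - x ≤ (y - x) ^ α :=
    Real.self_le_rpow_of_le_one hh0 (by linarith [Int.fract_lt_one y, Int.fract_nonneg x]) hα1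
  have hB0 : 0 ≤ B := (norm_nonneg _).trans (hB 0)
  have hlog : 0 ≤ Real.log q := Real.log_nonneg (by exact_mod_cast hq)
  have hcy : ‖((c (Int.fract y) : ℝ) : ℂ)‖ ≤ 1 := by
    rw [Complex.norm_real, Real.norm_of_nonneg (by positivity)]
    exact Real.rpow_le_one_of_one_le_of_nonpos (by exact_mod_cast hq)
      (by nlinarith [Int.fract_nonneg y, (Nat.cast_nonneg d : (0 : ℝ) ≤ d)])
  have hcdiff : ‖((c (Int.fract y) - c (Int.fract x) : ℝ) : ℂ)‖ ≤ d * Real.log q * (y - x) := by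
    rw [Complex.norm_real, Real.norm_eq_abs, ← hfract]
    exact abs_rpow_neg_mul_sub_le (by exact_mod_cast hq) (Nat.cast_nonneg d)
      (Int.fract_nonneg x) (by linarith)
  have hdecomp : fluctuation q d p f eT y - fluctuation q d p f eT x =
      -(eT : ℂ) * ((Int.fract y - Int.fract x : ℝ) : ℂ)
      - ((c (Int.fract y) : ℝ) : ℂ) * (W y - W x)
      - ((c (Int.fract y) - c (Int.fract x) : ℝ) : ℂ) * W x := by
    rw [fluctuation, fluctuation]; push_cast; ring
  calc ‖fluctuation q d p f eT y - fluctuation q d p f eT x‖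
      ≤ |eT| * (y - x) + C * (y - x) ^ α + d * Real.log q * (y - x) * B := by
        rw [hdecomp]
        refine (norm_sub_le _ _).trans (add_le_add ((norm_sub_le _ _).trans (add_le_add ?_ ?_)) ?_)
        · rw [norm_mul, norm_neg, Complex.norm_real, Complex.norm_real, hfract, Real.norm_eq_abs,
            Real.norm_of_nonneg hh0]
        · rw [norm_mul]
          exact (mul_le_mul hcy (hC x y hxy hfloor) (norm_nonneg _) zero_le_one).trans_eq
            (one_mul _)
        · rw [norm_mul]
          exact mul_le_mul hcdiff (hB x) (norm_nonneg _) (by positivity)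
    _ ≤ |eT| * (y - x) ^ α + C * (y - x) ^ α + d * Real.log q * (y - x) ^ α * B := by
        gcongr
    _ = (|eT| + C + d * Real.log q * B) * (y - x) ^ α := by ring

end fluctuation

theorem stmt12_general (q d p : ℕ) (hq : 2 ≤ q) (hd : 1 ≤ d)
    (eT : ℝ) (f : ℕ → ℕ → ℂ) (K : ℝ)
    (hf : ∀ l r : ℕ, 1 ≤ r → ‖f l r‖ ≤ K * (r : ℝ) ^ (d - 1) * (Real.log r + 1))
    (Ψ : ℝ → ℂ) (hcont : Continuous Ψ)
    (hΨ : ∀ x : ℝ, Ψ x = -(eT : ℂ) * ((Int.fract x : ℝ) : ℂ)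
      - (((q : ℝ) ^ (-(d : ℝ) * Int.fract x) : ℝ) : ℂ) *
        ∑ l ∈ Finset.range p, ∑' m : ℕ,
          (((q : ℝ) ^ (-(d : ℝ) * (m : ℝ)) : ℝ) : ℂ) *
          Complex.exp (2 * Real.pi * Complex.I * (l : ℂ) *
            (((⌊x⌋ : ℤ) : ℂ) - (m : ℂ)) / (p : ℂ)) *
          f l (Int.toNat ⌊(q : ℝ) ^ (Int.fract x + (m : ℝ))⌋)) :
    ∀ α : ℝ, α ∈ Set.Ioo (0 : ℝ) 1 →
      ∃ C : ℝ, 0 < C ∧ ∀ x y : ℝ, ‖Ψ y - Ψ x‖ ≤ C * |y - x| ^ α := by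
  rintro α ⟨hα0, hα1⟩
  obtain rfl : Ψ = fluctuation q d p f eT := funext fun x => by
    simpa only [fluctuation, fluctSeries, fluctSummand, digitPrefix, Int.floor_toNat] using hΨ x
  obtain ⟨B, hB⟩ := exists_norm_fluctSeries_le (p := p) hq hd hf
  have hB0 : 0 ≤ B := (norm_nonneg _).trans (hB 0)
  obtain ⟨C, hC0, hC⟩ := exists_holder_fluctSeries hq hd hf hcont hα0 hα1
  have hlog : 0 ≤ Real.log q := Real.log_nonneg (by exact_mod_cast (by omega : 1 ≤ q))
  exact exists_holder_of_holder_of_floor_eq hcont hα0.le (by positivity)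
    (norm_fluctuation_le (by omega) hB)
    fun x y hxy hfloor => norm_fluctuation_sub_le (by omega) hB hα1.le hC hxy hfloor

/-- The `p`-periodic continuous fluctuation `Ψ₁` of the expected output sum of a complete
deterministic subsequential transducer, given explicitly by
`Ψ₁(x) = −e_T {x} − q^{−d{x}} Σ_{l<p} Σ_{m≥0} q^{−dm} e^{2πil(⌊x⌋−m)/p} f_l((x_0…x_m)_q)`
where `q^{{x}} = (x_0.x_1x_2…)_q` (so `(x_0…x_m)_q = ⌊q^{{x}+m}⌋`) and
`f_l(r) = O(r^{d−1} log r)`, satisfies a Hölder condition of every order `α ∈ (0,1)`. -/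
theorem stmt12 (q d p : ℕ) (hq : 2 ≤ q) (hd : 1 ≤ d) (hp : 1 ≤ p)
    (eT : ℝ) (f : ℕ → ℕ → ℂ) (K : ℝ)
    (hf : ∀ l r : ℕ, 1 ≤ r → ‖f l r‖ ≤ K * (r : ℝ) ^ (d - 1) * (Real.log r + 1))
    (Ψ : ℝ → ℂ) (hcont : Continuous Ψ)
    (hΨ : ∀ x : ℝ, Ψ x = -(eT : ℂ) * ((Int.fract x : ℝ) : ℂ)
      - (((q : ℝ) ^ (-(d : ℝ) * Int.fract x) : ℝ) : ℂ) *
        ∑ l ∈ Finset.range p, ∑' m : ℕ,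
          (((q : ℝ) ^ (-(d : ℝ) * (m : ℝ)) : ℝ) : ℂ) *
          Complex.exp (2 * Real.pi * Complex.I * (l : ℂ) *
            (((⌊x⌋ : ℤ) : ℂ) - (m : ℂ)) / (p : ℂ)) *
          f l (Int.toNat ⌊(q : ℝ) ^ (Int.fract x + (m : ℝ))⌋)) :
    ∀ α : ℝ, α ∈ Set.Ioo (0 : ℝ) 1 →
      ∃ C : ℝ, 0 < C ∧ ∀ x y : ℝ, ‖Ψ y - Ψ x‖ ≤ C * |y - x| ^ α :=
  stmt12_general q d p hq hd eT f K hf Ψ hcont hΨ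
end
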